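/- Let k ≥ 5 with k ≡ 2 (mod 3), and let u be a vertex of the cycle graph C_k. Then the number of maximum dissociation sets of C_k not containing u is (k+1)/3, the number of maximum dissociation sets containing u with u of degree 1 in the induced subgraph is 2(k−2)/3, and the number of maximum dissociation sets containing u with u of degree 0 in the induced subgraph is 1. -/

import Mathlib

open scoped Classical

variable {V : Type*}

/-- The number of neighbors of `v` that lie inside the finite set `s`,
i.e. the degree of `v` in the subgraph induced by `s` (when `v ∈ s`). -/
noncomputable def nbrCount (G : SimpleGraph V) (s : Finset V) (v : V) : ℕ :=
  {w ∈ (s : Set V) | G.Adj v w}.ncard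

/-- `s` is a dissociation set of `G`: the subgraph induced by `s` has maximum degree at most 1. -/
def IsDissoc (G : SimpleGraph V) (s : Finset V) : Prop :=
  ∀ v ∈ s, nbrCount G s v ≤ 1

/-- The dissociation number of the subgraph of `G` induced by `A`. -/
noncomputable def dissNumOn (G : SimpleGraph V) (A : Set V) : ℕ :=
  sSup {n | ∃ s : Finset V, ↑s ⊆ A ∧ IsDissoc G s ∧ s.card = n}

/-- `s` is a maximum dissociation set of the subgraph of `G` induced by `A`. -/
def IsMaxDissocOn (G : SimpleGraph V) (A : Set V) (s : Finset V) : Prop :=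
  ↑s ⊆ A ∧ IsDissoc G s ∧ s.card = dissNumOn G A

/-- The number of maximum dissociation sets of the subgraph of `G` induced by `A`. -/
noncomputable def numMaxDissocOn (G : SimpleGraph V) (A : Set V) : ℕ :=
  Nat.card {s : Finset V // IsMaxDissocOn G A s}

/-- The dissociation number of `G`. -/
noncomputable def dissNum (G : SimpleGraph V) : ℕ :=
  dissNumOn G Set.univ

/-- `s` is a maximum dissociation set of `G`. -/
def IsMaxDissoc (G : SimpleGraph V) (s : Finset V) : Prop :=
  IsMaxDissocOn G Set.univ s

/-- The number `m(G)` of maximum dissociation sets of `G`. -/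
noncomputable def numMaxDissoc (G : SimpleGraph V) : ℕ :=
  numMaxDissocOn G Set.univ

/-- `m(G[A], u⁻)`: maximum dissociation sets of `G[A]` not containing `u`. -/
noncomputable def numMaxDissocOnAway (G : SimpleGraph V) (A : Set V) (u : V) : ℕ :=
  Nat.card {s : Finset V // IsMaxDissocOn G A s ∧ u ∉ s}

/-- `m(G[A], u⁰)`: maximum dissociation sets of `G[A]` containing `u` with induced degree 0. -/
noncomputable def numMaxDissocOnDeg0 (G : SimpleGraph V) (A : Set V) (u : V) : ℕ :=
  Nat.card {s : Finset V // IsMaxDissocOn G A s ∧ u ∈ s ∧ nbrCount G s u = 0}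

/-- `m(G[A], u¹)`: maximum dissociation sets of `G[A]` containing `u` with induced degree 1. -/
noncomputable def numMaxDissocOnDeg1 (G : SimpleGraph V) (A : Set V) (u : V) : ℕ :=
  Nat.card {s : Finset V // IsMaxDissocOn G A s ∧ u ∈ s ∧ nbrCount G s u = 1}

/-- `m(G, u⁻)`. -/
noncomputable def numMaxDissocAway (G : SimpleGraph V) (u : V) : ℕ :=
  numMaxDissocOnAway G Set.univ u

/-- `m(G, u⁰)`. -/
noncomputable def numMaxDissocDeg0 (G : SimpleGraph V) (u : V) : ℕ :=
  numMaxDissocOnDeg0 G Set.univ u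

/-- `m(G, u¹)`. -/
noncomputable def numMaxDissocDeg1 (G : SimpleGraph V) (u : V) : ℕ :=
  numMaxDissocOnDeg1 G Set.univ u

/-- `m̄`: relative count, `numMaxDissocOn G B` if `dissNumOn G B = dissNumOn G A`, else 0. -/
noncomputable def mbar (G : SimpleGraph V) (A B : Set V) : ℕ :=
  if dissNumOn G B = dissNumOn G A then numMaxDissocOn G B else 0

/-- `G` is a potted graph whose (unique) cycle has length `k`: `G` is connected and unicyclic
(equivalently, connected with as many edges as vertices), and its cycle has length `k` and
contains a unique vertex of degree larger than 2. -/
def IsPotted (G : SimpleGraph V) (k : ℕ) : Prop :=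
  G.Connected ∧ G.edgeSet.ncard = Nat.card V ∧
    ∃ (v : V) (c : G.Walk v v), c.IsCycle ∧ c.length = k ∧
      ∃! u, u ∈ c.support ∧ 2 < (G.neighborSet u).ncard


/-! ### Auxiliary development for cycle graphs -/

section CycAux

open Fin.NatCast Fin.CommRing

set_option linter.unusedSectionVars false

variable {k : ℕ} [NeZero k]

private lemma vcast {i : ℕ} (h : i < k) : ((i : Fin k)).val = i := by
  rw [Fin.val_natCast]; exact Nat.mod_eq_of_lt h

variable (hk5 : 5 ≤ k)
include hk5

private lemma vone : (1 : Fin k).val = 1 := by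
  rw [Fin.val_one']; exact Nat.mod_eq_of_lt (by omega)

omit hk5 in
private lemma vadd (a b : Fin k) :
    (a + b).val = if a.val + b.val < k then a.val + b.val else a.val + b.val - k := by
  have hd : (a + b).val = (a.val + b.val) % k := by rw [Fin.add_def]
  rw [hd]
  have ha := a.isLt; have hb := b.isLt
  split
  · exact Nat.mod_eq_of_lt (by omega)
  · rw [Nat.mod_eq_sub_mod (by omega)]; exact Nat.mod_eq_of_lt (by omega)

omit hk5 in
private lemma vsub (a b : Fin k) :
    (a - b).val = if b.val ≤ a.val then a.val - b.val else a.val + k - b.val := by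
  have hd : (a - b).val = ((k - b.val) + a.val) % k := by rw [Fin.sub_def]
  rw [hd]
  have ha := a.isLt; have hb := b.isLt
  split
  · have h : k - b.val + a.val = k + (a.val - b.val) := by omega
    rw [h, Nat.add_mod_left]
    exact Nat.mod_eq_of_lt (by omega)
  · have h : k - b.val + a.val = a.val + k - b.val := by omega
    rw [h]; exact Nat.mod_eq_of_lt (by omega)

private lemma vadd1 (a : Fin k) : (a + 1).val = if a.val + 1 < k then a.val + 1 else 0 := by
  rw [vadd, vone hk5]; have := a.isLt; split_ifs <;> omega

private lemma vsub1 (a : Fin k) : (a - 1).val = if 1 ≤ a.val then a.val - 1 else k - 1 := by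
  rw [vsub, vone hk5]; have := a.isLt; split_ifs <;> omega

private lemma cyc_adj {v w : Fin k} :
    (SimpleGraph.cycleGraph k).Adj v w ↔ w = v + 1 ∨ w = v - 1 := by
  rw [SimpleGraph.cycleGraph_adj']
  have hv := v.isLt; have hw := w.isLt
  rw [Fin.ext_iff, Fin.ext_iff, vadd1 hk5, vsub1 hk5, vsub v w, vsub w v]
  split_ifs <;> omega

private lemma nbr_formula (s : Finset (Fin k)) (v : Fin k) :
    nbrCount (SimpleGraph.cycleGraph k) s v
      = (if v + 1 ∈ s then 1 else 0) + (if v - 1 ∈ s then 1 else 0) := by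
  have hne : v + 1 ≠ v - 1 := by
    simp only [Ne, Fin.ext_iff, vadd1 hk5, vsub1 hk5]
    have := v.isLt; split_ifs <;> omega
  have hset : {w ∈ (s : Set (Fin k)) | (SimpleGraph.cycleGraph k).Adj v w}
      = ↑(s ∩ {v + 1, v - 1}) := by
    ext w
    simp only [Set.mem_setOf_eq, Finset.coe_inter, Set.mem_inter_iff, Finset.mem_coe,
      Finset.mem_insert, Finset.mem_singleton, cyc_adj hk5]
    try tauto
  rw [nbrCount, hset, Set.ncard_coe_finset]
  by_cases h1 : v + 1 ∈ s <;> by_cases h2 : v - 1 ∈ s <;>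
    simp [Finset.inter_insert_of_mem, Finset.inter_insert_of_notMem,
      Finset.inter_singleton_of_mem, Finset.inter_singleton_of_notMem, h1, h2, hne,
      Finset.card_pair, Finset.inter_comm]

private lemma dissoc_iff (s : Finset (Fin k)) :
    IsDissoc (SimpleGraph.cycleGraph k) s ↔ ∀ v, ¬(v - 1 ∈ s ∧ v ∈ s ∧ v + 1 ∈ s) := by
  constructor
  · rintro h v ⟨h1, h2, h3⟩
    have := h v h2
    rw [nbr_formula hk5] at this
    simp [h1, h3] at this
  · intro h v hv
    rw [nbr_formula hk5]
    have := h v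
    by_cases h1 : v + 1 ∈ s <;> by_cases h2 : v - 1 ∈ s <;> simp [h1, h2] <;> tauto

omit hk5

/-- The complement of the `j`-th maximum dissociation set: `{j, j+3, ..., j+3m}`. -/
def Tset (m : ℕ) (j : Fin k) : Finset (Fin k) :=
  (Finset.range (m+1)).image (fun i => j + ((3*i : ℕ) : Fin k))

/-- The `j`-th maximum dissociation set of the cycle. -/
def Sset (m : ℕ) (j : Fin k) : Finset (Fin k) := (Tset m j)ᶜ

variable {m : ℕ} (hk : k = 3*m+2)
include hk

private lemma mem_Tset {j t : Fin k} :
    t ∈ Tset m j ↔ 3 ∣ (t - j).val ∧ (t - j).val ≤ 3*m := by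
  simp only [Tset, Finset.mem_image, Finset.mem_range]
  constructor
  · rintro ⟨i, hi, rfl⟩
    have h3 : 3*i < k := by omega
    rw [add_sub_cancel_left, vcast h3]
    exact ⟨⟨i, rfl⟩, by omega⟩
  · rintro ⟨⟨i, hi⟩, hle⟩
    refine ⟨i, by omega, ?_⟩
    have h2 : ((3*i : ℕ) : Fin k) = t - j := by rw [← hi, Fin.cast_val_eq_self]
    rw [h2]; ring

include hk5 in
private lemma cover (j v : Fin k) : v - 1 ∈ Tset m j ∨ v ∈ Tset m j ∨ v + 1 ∈ Tset m j := by
  have e1 : v - 1 - j = (v - j) - 1 := by ring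
  have e2 : v + 1 - j = (v - j) + 1 := by ring
  rw [mem_Tset hk, mem_Tset hk, mem_Tset hk, e1, e2, vsub1 hk5, vadd1 hk5]
  have hd := (v - j).isLt
  split_ifs <;> omega

private lemma Tset_card (j : Fin k) : (Tset m j).card = m + 1 := by
  rw [Tset, Finset.card_image_of_injOn, Finset.card_range]
  intro i₁ h₁ i₂ h₂ he
  simp only [Finset.coe_range, Set.mem_Iio] at h₁ h₂
  have := add_left_cancel he
  have v1 : ((3*i₁ : ℕ) : Fin k).val = 3*i₁ := vcast (by omega)
  have v2 : ((3*i₂ : ℕ) : Fin k).val = 3*i₂ := vcast (by omega)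
  have : ((3*i₁ : ℕ) : Fin k).val = ((3*i₂ : ℕ) : Fin k).val := by rw [this]
  omega

private lemma Sset_card (j : Fin k) : (Sset m j).card = 2*m + 1 := by
  rw [Sset, Finset.card_compl, Tset_card hk, Fintype.card_fin]; omega

include hk5 in
private lemma Sset_dissoc (j : Fin k) : IsDissoc (SimpleGraph.cycleGraph k) (Sset m j) := by
  rw [dissoc_iff hk5]
  rintro v ⟨h1, h2, h3⟩
  rw [Sset, Finset.mem_compl] at h1 h2 h3
  rcases cover hk5 hk j v with h | h | h <;> tauto

include hk5 in
private lemma card_le_of_dissoc (s : Finset (Fin k))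
    (hs : IsDissoc (SimpleGraph.cycleGraph k) s) : s.card ≤ 2*m + 1 := by
  classical
  set F : Fin k → ℕ := fun v => if v ∈ s then 1 else 0 with hF
  have hshift : ∀ c : Fin k, ∑ v : Fin k, F (v + c) = ∑ v : Fin k, F v := by
    intro c
    exact Fintype.sum_bijective (Equiv.addRight c) (Equiv.bijective _) _ _ (fun x => rfl)
  have hbase : ∑ v : Fin k, F v = s.card := by
    rw [hF]
    rw [Finset.sum_ite_mem, Finset.univ_inter, Finset.sum_const, smul_eq_mul, mul_one]
  have hwin : ∀ v : Fin k, F v + F (v + 1) + F (v + 1 + 1) ≤ 2 := by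
    intro v
    have hd := (dissoc_iff hk5 s).1 hs (v + 1)
    have e1 : v + 1 - 1 = v := by ring
    rw [e1] at hd
    simp only [hF]
    split_ifs <;> simp_all
  have hsum : ∑ v : Fin k, (F v + F (v + 1) + F (v + 1 + 1)) ≤ 2 * k := by
    calc ∑ v : Fin k, (F v + F (v + 1) + F (v + 1 + 1)) ≤ ∑ _v : Fin k, 2 :=
          Finset.sum_le_sum (fun i _ => hwin i)
      _ = 2 * k := by
          rw [Finset.sum_const, smul_eq_mul, Finset.card_univ, Fintype.card_fin]; ring
  rw [Finset.sum_add_distrib, Finset.sum_add_distrib] at hsum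
  have e2 : ∀ v : Fin k, F (v + 1 + 1) = F (v + (1 + 1)) := by intro v; rw [add_assoc]
  rw [Finset.sum_congr rfl (fun v _ => e2 v), hshift 1, hshift (1 + 1), hbase] at hsum
  omega

include hk5 in
private lemma dissNum_eq : dissNumOn (SimpleGraph.cycleGraph k) Set.univ = 2*m + 1 := by
  unfold dissNumOn
  have hne : {n | ∃ s : Finset (Fin k), ↑s ⊆ (Set.univ : Set (Fin k)) ∧
      IsDissoc (SimpleGraph.cycleGraph k) s ∧ s.card = n}.Nonempty :=
    ⟨0, ∅, by simp, fun v hv => by simp at hv, rfl⟩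
  apply le_antisymm
  · apply csSup_le hne
    rintro n ⟨s, -, hd, rfl⟩
    exact card_le_of_dissoc hk5 hk s hd
  · apply le_csSup
    · refine ⟨2*m+1, ?_⟩
      rintro n ⟨s, -, hd, rfl⟩
      exact card_le_of_dissoc hk5 hk s hd
    · exact ⟨Sset m 0, by simp, Sset_dissoc hk5 hk 0, Sset_card hk 0⟩

include hk5 in
private lemma structure_thm (s : Finset (Fin k)) (hd : IsDissoc (SimpleGraph.cycleGraph k) s)
    (hc : s.card = 2*m+1) : ∃ j, s = Sset m j := by
  classical
  have hcompl_card : (sᶜ : Finset (Fin k)).card = m + 1 := by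
    rw [Finset.card_compl, hc, Fintype.card_fin]; omega
  set χ : Fin k → ℕ := fun v => if v ∈ sᶜ then 1 else 0 with hχ
  have hχle : ∀ v, χ v ≤ 1 := by intro v; simp only [hχ]; split <;> omega
  have hχ0 : ∀ v, χ v = 0 ↔ v ∈ s := by
    intro v; simp only [hχ]; split <;> simp_all [Finset.mem_compl]
  have hχ1 : ∀ v, χ v = 1 ↔ v ∈ sᶜ := by
    intro v; simp only [hχ]; split <;> simp_all
  set w : Fin k → ℕ := fun v => χ v + χ (v+1) + χ (v+1+1) with hw
  have hcover : ∀ v, 1 ≤ w v := by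
    intro v
    by_contra h
    have h0 : χ v = 0 ∧ χ (v+1) = 0 ∧ χ (v+1+1) = 0 := by simp only [hw] at h; omega
    have hd' := (dissoc_iff hk5 s).1 hd (v+1)
    have e1 : v + 1 - 1 = v := by ring
    rw [e1] at hd'
    exact hd' ⟨(hχ0 v).1 h0.1, (hχ0 _).1 h0.2.1, (hχ0 _).1 h0.2.2⟩
  have hshift : ∀ c : Fin k, ∑ v : Fin k, χ (v + c) = m + 1 := by
    intro c
    have : ∑ v : Fin k, χ (v + c) = ∑ v : Fin k, χ v :=
      Fintype.sum_bijective (Equiv.addRight c) (Equiv.bijective _) _ _ (fun x => rfl)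
    rw [this, hχ, Finset.sum_ite_mem, Finset.univ_inter, Finset.sum_const, smul_eq_mul,
      mul_one, hcompl_card]
  have hbase : ∑ v : Fin k, χ v = m + 1 := by
    have := hshift 0; simpa using this
  have hsum : ∑ v : Fin k, w v = k + 1 := by
    simp only [hw]
    rw [Finset.sum_add_distrib, Finset.sum_add_distrib, hbase]
    have e2 : ∀ v : Fin k, χ (v + 1 + 1) = χ (v + (1 + 1)) := fun v => by rw [add_assoc]
    rw [Finset.sum_congr rfl (fun v _ => e2 v), hshift 1, hshift (1+1)]
    omega
  have hex : ∃ v₀ : Fin k, 2 ≤ w v₀ := by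
    by_contra h
    push_neg at h
    have : ∑ v : Fin k, w v ≤ ∑ _v : Fin k, 1 := Finset.sum_le_sum (fun i _ => by
      have := h i; omega)
    rw [hsum, Finset.sum_const, smul_eq_mul, mul_one, Finset.card_univ,
      Fintype.card_fin] at this
    omega
  obtain ⟨v₀, hv₀⟩ := hex
  have hsplit : w v₀ + ∑ v ∈ Finset.univ.erase v₀, w v = k + 1 := by
    rw [Finset.add_sum_erase Finset.univ w (Finset.mem_univ v₀), hsum]
  have hcard_er : (Finset.univ.erase v₀).card = k - 1 := by
    rw [Finset.card_erase_of_mem (Finset.mem_univ v₀), Finset.card_univ, Fintype.card_fin]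
  have hge : k - 1 ≤ ∑ v ∈ Finset.univ.erase v₀, w v := by
    calc k - 1 = ∑ _v ∈ Finset.univ.erase v₀, 1 := by
          rw [Finset.sum_const, smul_eq_mul, mul_one, hcard_er]
      _ ≤ _ := Finset.sum_le_sum (fun i _ => hcover i)
  have hwv₀ : w v₀ = 2 := by omega
  have hone : ∀ v : Fin k, v ≠ v₀ → w v = 1 := by
    have heq : ∑ _v ∈ Finset.univ.erase v₀, 1 = ∑ v ∈ Finset.univ.erase v₀, w v := by
      rw [Finset.sum_const, smul_eq_mul, mul_one, hcard_er]; omega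
    have := (Finset.sum_eq_sum_iff_of_le (fun i _ => hcover i)).1 heq
    intro v hv
    exact (this v (Finset.mem_erase.2 ⟨hv, Finset.mem_univ v⟩)).symm
  have hstep : ∀ x : Fin k, x ≠ v₀ → x + 1 ≠ v₀ → χ (x + 1 + 1 + 1) = χ x := by
    intro x h1 h2
    have e1 := hone x h1
    have e2 := hone (x+1) h2
    simp only [hw] at e1 e2
    omega
  have hne1 : v₀ + 1 ≠ v₀ := by
    intro h
    have h2 := congrArg Fin.val h
    rw [vadd1 hk5] at h2
    have := v₀.isLt
    split_ifs at h2 <;> omega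
  have hne2 : v₀ - 1 ≠ v₀ := by
    intro h
    have h2 := congrArg Fin.val h
    rw [vsub1 hk5] at h2
    have := v₀.isLt
    split_ifs at h2 <;> omega
  have hw0 : χ v₀ + χ (v₀+1) + χ (v₀+1+1) = 2 := hwv₀
  have hw1 : χ (v₀+1) + χ (v₀+1+1) + χ (v₀+1+1+1) = 1 := hone (v₀+1) hne1
  have hwm1 : χ (v₀-1) + χ v₀ + χ (v₀+1) = 1 := by
    have := hone (v₀-1) hne2
    simp only [hw] at this
    have e1 : v₀ - 1 + 1 = v₀ := by ring
    rw [e1] at this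
    exact this
  have hval : χ (v₀+1+1) = 1 ∧ χ (v₀+1+1+1) = 0 := by
    have a0 := hχle v₀; have a1 := hχle (v₀+1); have a2 := hχle (v₀+1+1)
    have a3 := hχle (v₀+1+1+1); have am := hχle (v₀-1)
    omega
  set j : Fin k := v₀ + 1 + 1 with hj
  have hclaim : ∀ i : ℕ, i ≤ m → j + ((3*i : ℕ) : Fin k) ∈ sᶜ := by
    intro i
    induction i with
    | zero =>
      intro _
      simp only [Nat.mul_zero, Nat.cast_zero, add_zero]
      exact (hχ1 j).1 hval.1
    | succ i ih =>
      intro hi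
      have hx : j + ((3*i : ℕ) : Fin k) ∈ sᶜ := ih (by omega)
      set x : Fin k := j + ((3*i : ℕ) : Fin k) with hxd
      have hxv : (x - v₀).val = 3*i + 2 := by
        have e : x - v₀ = ((3*i + 2 : ℕ) : Fin k) := by
          rw [hxd, hj]; push_cast; ring
        rw [e, vcast (by omega)]
      have hxv1 : (x + 1 - v₀).val = 3*i + 3 := by
        have e : x + 1 - v₀ = ((3*i + 3 : ℕ) : Fin k) := by
          rw [hxd, hj]; push_cast; ring
        rw [e, vcast (by omega)]
      have hx_ne : x ≠ v₀ := by
        intro h; rw [h, sub_self] at hxv; simp at hxv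
      have hx1_ne : x + 1 ≠ v₀ := by
        intro h; rw [h, sub_self] at hxv1; simp at hxv1
      have := hstep x hx_ne hx1_ne
      have e3 : x + 1 + 1 + 1 = j + ((3*(i+1) : ℕ) : Fin k) := by
        rw [hxd]; push_cast; ring
      rw [e3] at this
      rw [← hχ1, this]
      exact (hχ1 x).2 hx
  have hsub : Tset m j ⊆ sᶜ := by
    intro t ht
    simp only [Tset, Finset.mem_image, Finset.mem_range] at ht
    obtain ⟨i, hi, rfl⟩ := ht
    exact hclaim i (by omega)
  have hTeq : Tset m j = sᶜ :=
    Finset.eq_of_subset_of_card_le hsub (by rw [hcompl_card, Tset_card hk])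
  exact ⟨j, by rw [Sset, hTeq, compl_compl]⟩

include hk5

private lemma Sset_max (j : Fin k) :
    IsMaxDissocOn (SimpleGraph.cycleGraph k) Set.univ (Sset m j) :=
  ⟨by simp, Sset_dissoc hk5 hk j, by rw [Sset_card hk, dissNum_eq hk5 hk]⟩

private lemma max_iff (s : Finset (Fin k)) :
    IsMaxDissocOn (SimpleGraph.cycleGraph k) Set.univ s ↔ ∃ j, s = Sset m j := by
  constructor
  · rintro ⟨-, hd, hc⟩
    exact structure_thm hk5 hk s hd (by rw [hc, dissNum_eq hk5 hk])
  · rintro ⟨j, rfl⟩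
    exact Sset_max hk5 hk j

private lemma mem_Tself (j : Fin k) : j ∈ Tset m j := by
  rw [mem_Tset hk, sub_self]; simp

private lemma Tset_inj : Function.Injective (Tset (k := k) m) := by
  intro j₁ j₂ he
  by_contra hne
  have h1 : j₁ ∈ Tset m j₂ := by rw [← he]; exact mem_Tself hk5 hk j₁
  have h2 : j₂ ∈ Tset m j₁ := by rw [he]; exact mem_Tself hk5 hk j₂
  rw [mem_Tset hk] at h1 h2
  rw [vsub] at h1 h2
  have hv : j₁.val ≠ j₂.val := fun h => hne (Fin.ext h)
  have := j₁.isLt; have := j₂.isLt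
  split_ifs at h1 h2 <;> omega

private lemma Sset_inj : Function.Injective (Sset (k := k) m) := by
  intro j₁ j₂ he
  exact Tset_inj hk5 hk (compl_injective he)

private lemma count_general (J : Finset (Fin k)) (Q : Finset (Fin k) → Prop)
    (hQ : ∀ j : Fin k, Q (Sset m j) ↔ j ∈ J) :
    Nat.card {s : Finset (Fin k) //
      IsMaxDissocOn (SimpleGraph.cycleGraph k) Set.univ s ∧ Q s} = J.card := by
  have hseteq : {s : Finset (Fin k) |
      IsMaxDissocOn (SimpleGraph.cycleGraph k) Set.univ s ∧ Q s} = Sset m '' ↑J := by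
    ext s
    simp only [Set.mem_setOf_eq, Set.mem_image, Finset.mem_coe]
    constructor
    · rintro ⟨hmax, hq⟩
      obtain ⟨j, rfl⟩ := (max_iff hk5 hk s).1 hmax
      exact ⟨j, (hQ j).1 hq, rfl⟩
    · rintro ⟨j, hj, rfl⟩
      exact ⟨Sset_max hk5 hk j, (hQ j).2 hj⟩
  have h1 : Nat.card {s : Finset (Fin k) //
      IsMaxDissocOn (SimpleGraph.cycleGraph k) Set.univ s ∧ Q s}
      = Set.ncard {s : Finset (Fin k) |
      IsMaxDissocOn (SimpleGraph.cycleGraph k) Set.univ s ∧ Q s} :=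
    Nat.card_coe_set_eq _
  rw [h1, hseteq, Set.ncard_image_of_injective _ (Sset_inj hk5 hk), Set.ncard_coe_finset]

omit hk5 hk

/-- The set of indices `j` with `u ∈ Tset m j`. -/
def Jaway (m : ℕ) (u : Fin k) : Finset (Fin k) :=
  (Finset.range (m+1)).image (fun i => u - ((3*i : ℕ) : Fin k))

private lemma mem_Jaway {u j : Fin k} : j ∈ Jaway m u ↔ u ∈ Tset m j := by
  simp only [Jaway, Tset, Finset.mem_image, Finset.mem_range]
  constructor
  · rintro ⟨i, hi, rfl⟩
    exact ⟨i, hi, by ring⟩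
  · rintro ⟨i, hi, rfl⟩
    exact ⟨i, hi, by ring⟩

include hk in
private lemma Jaway_card (u : Fin k) : (Jaway m u).card = m + 1 := by
  rw [Jaway, Finset.card_image_of_injOn, Finset.card_range]
  intro i₁ h₁ i₂ h₂ he
  simp only [Finset.coe_range, Set.mem_Iio] at h₁ h₂
  have he' : u - ((3*i₁ : ℕ) : Fin k) = u - ((3*i₂ : ℕ) : Fin k) := he
  have hc : ((3*i₁ : ℕ) : Fin k) = ((3*i₂ : ℕ) : Fin k) := by
    have e1 : ((3*i₁ : ℕ) : Fin k) = u - (u - ((3*i₁ : ℕ) : Fin k)) := by ring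
    rw [e1, he']; ring
  have v1 : ((3*i₁ : ℕ) : Fin k).val = 3*i₁ := vcast (by omega)
  have v2 : ((3*i₂ : ℕ) : Fin k).val = 3*i₂ := vcast (by omega)
  rw [hc, v2] at v1
  omega

include hk5

private lemma vneg1 : (-1 : Fin k).val = k - 1 := by
  have e : (-1 : Fin k) = 0 - 1 := by ring
  rw [e, vsub1 hk5]
  simp

include hk

private lemma away_iff (u j : Fin k) : u ∉ Sset m j ↔ j ∈ Jaway m u := by
  rw [Sset, Finset.mem_compl, not_not, mem_Jaway]

private lemma deg0_iff (u j : Fin k) :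
    (u ∈ Sset m j ∧ nbrCount (SimpleGraph.cycleGraph k) (Sset m j) u = 0) ↔ j = u + 1 := by
  have e1 : u + 1 - j = (u - j) + 1 := by ring
  have e2 : u - 1 - j = (u - j) - 1 := by ring
  constructor
  · rintro ⟨hu, h0⟩
    rw [nbr_formula hk5] at h0
    have h1 : u + 1 ∉ Sset m j := by intro h; simp [h] at h0
    have h2 : u - 1 ∉ Sset m j := by intro h; simp [h] at h0
    rw [Sset, Finset.mem_compl, not_not, mem_Tset hk, e1, vadd1 hk5] at h1
    rw [Sset, Finset.mem_compl, not_not, mem_Tset hk, e2, vsub1 hk5] at h2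
    rw [Sset, Finset.mem_compl, mem_Tset hk] at hu
    have hd := (u - j).isLt
    have hdk : (u - j).val = k - 1 := by split_ifs at h1 h2 <;> omega
    have huj : u - j = -1 := by
      apply Fin.ext
      rw [hdk, vneg1 hk5]
    have : j = u - (u - j) := by ring
    rw [this, huj]; ring
  · rintro rfl
    have m1 : u ∉ Tset m (u + 1) := by
      rw [mem_Tset hk]
      have e : u - (u + 1) = -1 := by ring
      rw [e, vneg1 hk5]
      omega
    have m2 : u + 1 ∈ Tset m (u + 1) := mem_Tself hk5 hk (u + 1)
    have m3 : u - 1 ∈ Tset m (u + 1) := by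
      rw [mem_Tset hk]
      have e : u - 1 - (u + 1) = -1 - 1 := by ring
      have hv : (-1 - 1 : Fin k).val = k - 2 := by
        rw [vsub1 hk5, vneg1 hk5]
        split_ifs <;> omega
      rw [e, hv]
      omega
    refine ⟨by rw [Sset, Finset.mem_compl]; exact m1, ?_⟩
    rw [nbr_formula hk5]
    have n2 : u + 1 ∉ Sset m (u + 1) := by rw [Sset, Finset.mem_compl, not_not]; exact m2
    have n3 : u - 1 ∉ Sset m (u + 1) := by rw [Sset, Finset.mem_compl, not_not]; exact m3
    simp [n2, n3]

private lemma deg1_iff (u j : Fin k) :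
    (u ∈ Sset m j ∧ nbrCount (SimpleGraph.cycleGraph k) (Sset m j) u = 1) ↔
      j ∈ (Jaway m u)ᶜ.erase (u + 1) := by
  rw [Finset.mem_erase, Finset.mem_compl, ← away_iff hk5 hk, not_not]
  constructor
  · rintro ⟨hu, h1⟩
    refine ⟨?_, hu⟩
    intro he
    have := ((deg0_iff hk5 hk u j).2 he).2
    omega
  · rintro ⟨hne, hu'⟩
    refine ⟨hu', ?_⟩
    have hle : nbrCount (SimpleGraph.cycleGraph k) (Sset m j) u ≤ 1 :=
      Sset_dissoc hk5 hk j u hu'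
    have h0 : nbrCount (SimpleGraph.cycleGraph k) (Sset m j) u ≠ 0 := by
      intro h
      exact hne ((deg0_iff hk5 hk u j).1 ⟨hu', h⟩)
    omega

private lemma uplus1_notin_Jaway (u : Fin k) : u + 1 ∉ Jaway m u := by
  rw [mem_Jaway, mem_Tset hk]
  have e : u - (u + 1) = -1 := by ring
  rw [e, vneg1 hk5]
  omega

end CycAux

theorem cycleGraph_counts_mod3_eq_2 (k : ℕ) (hk : 5 ≤ k) (hmod : k % 3 = 2) (u : Fin k) :
    numMaxDissocAway (SimpleGraph.cycleGraph k) u = (k + 1) / 3 ∧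
    numMaxDissocDeg1 (SimpleGraph.cycleGraph k) u = 2 * (k - 2) / 3 ∧
    numMaxDissocDeg0 (SimpleGraph.cycleGraph k) u = 1 := by
  haveI : NeZero k := ⟨by omega⟩
  obtain ⟨m, hkm⟩ : ∃ m, k = 3*m+2 := ⟨(k-2)/3, by omega⟩
  refine ⟨?_, ?_, ?_⟩
  · rw [numMaxDissocAway, numMaxDissocOnAway,
      count_general hk hkm (Jaway m u) (fun s => u ∉ s)
        (fun j => away_iff hk hkm u j),
      Jaway_card hkm u]
    omega
  · rw [numMaxDissocDeg1, numMaxDissocOnDeg1,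
      count_general hk hkm ((Jaway m u)ᶜ.erase (u + 1))
        (fun s => u ∈ s ∧ nbrCount (SimpleGraph.cycleGraph k) s u = 1)
        (fun j => deg1_iff hk hkm u j),
      Finset.card_erase_of_mem (Finset.mem_compl.2 (uplus1_notin_Jaway hk hkm u)),
      Finset.card_compl, Jaway_card hkm u, Fintype.card_fin]
    omega
  · rw [numMaxDissocDeg0, numMaxDissocOnDeg0,
      count_general hk hkm {u + 1}
        (fun s => u ∈ s ∧ nbrCount (SimpleGraph.cycleGraph k) s u = 0)
        (fun j => by rw [Finset.mem_singleton]; exact deg0_iff hk hkm u j),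
      Finset.card_singleton]
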